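/- arXiv:2209.05259 — 6 statements merged into one kernel-verified Lean document; each statement's English description precedes it below -/
import Mathlib

section
/- Let $G$ be a 7-connected graph and let $H$ be a subgraph of $G$ with 8 vertices such that $H$ is obtained from $K_8$ by deleting at most 5 edges. If $G$ has strictly more than 8 vertices, then $G$ has a $\mathcal{K}_9^{-6}$ minor. -/
/-
Pick a vertex `v` outside the copy `W` of `H` and let `C` be the set of vertices reachable from
`v` in `G - W`. If fewer than 7 vertices of `W` had a neighbour in `C`, deleting them would
leave `G` connected, yet every path from `v` to the rest of `W` leaves `C` through one of them.
So contracting `C` to a ninth vertex gives a minor consisting of `H` plus a vertex joined to at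
least 7 of its vertices: at least `23 + 7 = 30` edges, and deleting surplus edges leaves 30.
-/

open SimpleGraph

/-- `H` is a minor of `G`: there is a minor model (branch decomposition) of `H` in `G`. -/
def IsMinorOf {β α : Type*} (H : SimpleGraph β) (G : SimpleGraph α) : Prop :=
  ∃ f : β → Set α,
    (∀ b, (f b).Nonempty) ∧
    (∀ b, (G.induce (f b)).Connected) ∧
    (Pairwise fun b₁ b₂ => Disjoint (f b₁) (f b₂)) ∧
    (∀ ⦃b₁ b₂⦄, H.Adj b₁ b₂ → ∃ a₁ ∈ f b₁, ∃ a₂ ∈ f b₂, G.Adj a₁ a₂)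

/-- `G` has a `𝒦₉⁻⁶` minor: a minor isomorphic to `K₉` with 6 edges deleted,
i.e. a graph on 9 vertices with exactly `36 - 6 = 30` edges. -/
def HasK96Minor {α : Type*} (G : SimpleGraph α) : Prop :=
  ∃ H : SimpleGraph (Fin 9), H.edgeSet.ncard = 30 ∧ IsMinorOf H G
/-- `G` is `k`-connected: more than `k` vertices, and deleting any set of fewer
than `k` vertices leaves a connected graph. -/
def KConnected {α : Type*} [Fintype α] (k : ℕ) (G : SimpleGraph α) : Prop :=
  k < Fintype.card α ∧ ∀ S : Set α, S.ncard < k → (G.induce Sᶜ).Connected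

namespace SimpleGraph

variable {V : Type*} (G : SimpleGraph V)

def componentAvoiding (W : Set V) (v : V) : Set V :=
  {u | ∃ p : G.Walk v u, ∀ x ∈ p.support, x ∉ W}

variable {G} {W : Set V} {u v y : V}

theorem self_mem_componentAvoiding (hv : v ∉ W) : v ∈ G.componentAvoiding W v :=
  ⟨Walk.nil, by simpa using hv⟩

theorem disjoint_componentAvoiding : Disjoint (G.componentAvoiding W v) W :=
  Set.disjoint_left.mpr fun u ⟨p, hp⟩ => hp u p.end_mem_support

theorem mem_componentAvoiding_of_adj (hu : u ∈ G.componentAvoiding W v) (hy : y ∉ W)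
    (huy : G.Adj u y) : y ∈ G.componentAvoiding W v := by
  obtain ⟨p, hp⟩ := hu
  refine ⟨p.concat huy, fun x hx => ?_⟩
  rw [Walk.support_concat, List.mem_append, List.mem_singleton] at hx
  rcases hx with hx | rfl
  exacts [hp x hx, hy]

theorem connected_induce_componentAvoiding (hv : v ∉ W) :
    (G.induce (G.componentAvoiding W v)).Connected := by
  classical
  refine G.induce_connected_of_patches v (self_mem_componentAvoiding hv) ?_
  rintro u ⟨p, hp⟩
  refine ⟨{x | x ∈ p.support}, fun x hx => ?_, p.start_mem_support, p.end_mem_support,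
    p.connected_induce_support.preconnected _ _⟩
  exact ⟨p.takeUntil x hx, fun z hz => hp z (p.support_takeUntil_subset_support hx hz)⟩

end SimpleGraph

theorem KConnected.le_ncard_attachments {V : Type*} [Fintype V] {G : SimpleGraph V} {k : ℕ}
    (hG : KConnected k G) {W : Set V} (hW : k ≤ W.ncard) {v : V} (hv : v ∉ W) :
    k ≤ {w ∈ W | ∃ u ∈ G.componentAvoiding W v, G.Adj u w}.ncard := by
  set C := G.componentAvoiding W v
  set N := {w ∈ W | ∃ u ∈ C, G.Adj u w}
  by_contra! hN
  obtain ⟨w, hwW, hwN⟩ := Set.exists_mem_notMem_of_ncard_lt_ncard (hN.trans_le hW)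
  have hvN : v ∈ Nᶜ := fun h => hv h.1
  obtain ⟨p⟩ := (hG.2 N hN).preconnected ⟨v, hvN⟩ ⟨w, hwN⟩
  obtain ⟨d, -, hd_in, hd_out⟩ := p.exists_boundary_dart {x | x.1 ∈ C}
    (self_mem_componentAvoiding hv) fun h => disjoint_componentAvoiding.notMem_of_mem_left h hwW
  have hadj : G.Adj d.fst d.snd := d.adj
  have hsndW : d.snd.1 ∈ W := by
    by_contra h
    exact hd_out (mem_componentAvoiding_of_adj hd_in h hadj)
  exact d.snd.2 ⟨hsndW, d.fst, hd_in, hadj⟩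

namespace SimpleGraph

theorem exists_le_ncard_edgeSet_eq {β : Type*} (H : SimpleGraph β) {m : ℕ}
    (hm : m ≤ H.edgeSet.ncard) : ∃ H' ≤ H, H'.edgeSet.ncard = m := by
  obtain ⟨s, hs, rfl⟩ := Set.exists_subset_card_eq hm
  refine ⟨fromEdgeSet s, fun a b hab => ?_, ?_⟩
  · exact hs ((fromEdgeSet_adj s).mp hab).1
  · rw [edgeSet_fromEdgeSet, (sdiff_eq_left (y := Sym2.diagSet)).mpr
      (Set.disjoint_left.mpr fun e he => H.not_isDiag_of_mem_edgeSet (hs he))]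

variable {n : ℕ}

def addApex (H : SimpleGraph (Fin n)) (D : Set (Fin n)) : SimpleGraph (Fin (n + 1)) :=
  H.map Fin.castSuccEmb ⊔ fromEdgeSet ((fun i => s(Fin.last n, i.castSucc)) '' D)

variable (H : SimpleGraph (Fin n)) (D : Set (Fin n))

theorem addApex_adj_castSucc {i j : Fin n} :
    (H.addApex D).Adj i.castSucc j.castSucc ↔ H.Adj i j := by
  rw [addApex, sup_adj, map_adj]
  simp [(Fin.castSucc_ne_last _).symm]

theorem addApex_adj_last {i : Fin n} : (H.addApex D).Adj (Fin.last n) i.castSucc ↔ i ∈ D := by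
  rw [addApex, sup_adj, map_adj]
  simp [(Fin.castSucc_ne_last _).symm]

theorem ncard_edgeSet_addApex : (H.addApex D).edgeSet.ncard = H.edgeSet.ncard + D.ncard := by
  have hdisj : Disjoint (Fin.castSuccEmb.sym2Map '' H.edgeSet)
      ((fun i => s(Fin.last n, i.castSucc)) '' D) := by
    rw [Set.disjoint_left]
    rintro _ ⟨e, -, rfl⟩ ⟨i, -, he⟩
    induction e with
    | _ a b => simp [(Fin.castSucc_ne_last _).symm] at he
  have hstar : (fromEdgeSet ((fun i => s(Fin.last n, i.castSucc)) '' D)).edgeSet =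
      (fun i => s(Fin.last n, i.castSucc)) '' D := by
    rw [edgeSet_fromEdgeSet, sdiff_eq_left, Set.disjoint_left]
    rintro _ ⟨i, -, rfl⟩
    simpa using (Fin.castSucc_ne_last i).symm
  rw [addApex, edgeSet_sup, edgeSet_map, hstar, Set.ncard_union_eq hdisj,
    Set.ncard_image_of_injective _ (Function.Embedding.sym2Map _).injective,
    Set.ncard_image_of_injective]
  intro i j hij
  simpa [Sym2.eq_iff, Fin.castSucc_ne_last] using hij

end SimpleGraph

theorem IsMinorOf.mono {α β : Type*} {H H' : SimpleGraph β} {G : SimpleGraph α} (hle : H' ≤ H)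
    (h : IsMinorOf H G) : IsMinorOf H' G := by
  obtain ⟨f, hne, hconn, hdisj, hadj⟩ := h
  exact ⟨f, hne, hconn, hdisj, fun _ _ hb => hadj (hle hb)⟩

theorem isMinorOf_addApex {V : Type*} {G : SimpleGraph V} {n : ℕ} {H : SimpleGraph (Fin n)}
    {f : Fin n → V} (hf : Function.Injective f) (hhom : ∀ a b, H.Adj a b → G.Adj (f a) (f b))
    {C : Set V} (hC : (G.induce C).Connected) (hCf : Disjoint C (Set.range f))
    {D : Set (Fin n)} (hD : ∀ i ∈ D, ∃ u ∈ C, G.Adj u (f i)) :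
    IsMinorOf (H.addApex D) G := by
  have hCne : C.Nonempty := by
    obtain ⟨⟨u, hu⟩⟩ := hC.nonempty
    exact ⟨u, hu⟩
  have hfC (i : Fin n) : f i ∉ C := fun h => hCf.notMem_of_mem_left h ⟨i, rfl⟩
  refine ⟨Fin.lastCases C fun i => {f i}, ?_, ?_, ?_, ?_⟩
  · intro b
    induction b using Fin.lastCases with
    | last => simpa using hCne
    | cast i => simp
  · intro b
    beta_reduce
    induction b using Fin.lastCases with
    | last => rwa [Fin.lastCases_last]
    | cast i =>
      rw [Fin.lastCases_castSucc, induce_singleton_eq_top]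
      exact connected_top
  · intro b₁ b₂ hne
    induction b₁ using Fin.lastCases <;> induction b₂ using Fin.lastCases
    · exact absurd rfl hne
    · simpa using hfC _
    · simpa using hfC _
    · simpa [hf.eq_iff] using hne
  · intro b₁ b₂ hadj
    induction b₁ using Fin.lastCases <;> induction b₂ using Fin.lastCases
    · exact absurd rfl hadj.ne
    · simpa using hD _ ((H.addApex_adj_last D).mp hadj)
    · obtain ⟨u, hu, hadj⟩ := hD _ ((H.addApex_adj_last D).mp hadj.symm)
      simpa using ⟨u, hu, hadj.symm⟩
    · simpa using hhom _ _ ((H.addApex_adj_castSucc D).mp hadj)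

/-- If a 7-connected graph on more than 8 vertices contains a subgraph on 8 vertices
obtained from `K₈` by deleting at most 5 edges (i.e. with at least `28 - 5 = 23` edges),
then it has a `𝒦₉⁻⁶` minor. -/
theorem K8_minus_at_most_5_subgraph_gives_K9_minus6_minor
    {V : Type*} [Fintype V] (G : SimpleGraph V)
    (h7 : KConnected 7 G) (H : SimpleGraph (Fin 8))
    (hH : 23 ≤ H.edgeSet.ncard)
    (f : Fin 8 → V) (hf : Function.Injective f)
    (hhom : ∀ a b, H.Adj a b → G.Adj (f a) (f b))
    (hcard : 8 < Fintype.card V) :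
    HasK96Minor G := by
  obtain ⟨v, hv⟩ : ∃ v, v ∉ Set.range f := by
    by_contra! h
    exact (Fintype.card_le_of_surjective f h).not_gt (by simpa using hcard)
  set C := G.componentAvoiding (Set.range f) v
  set N := {w ∈ Set.range f | ∃ u ∈ C, G.Adj u w}
  have hN : 7 ≤ (f ⁻¹' N).ncard := by
    rw [Set.ncard_preimage_of_injective_subset_range hf fun _ h => h.1]
    exact h7.le_ncard_attachments (by simp [Set.ncard_range_of_injective hf]) hv
  obtain ⟨H', hle, hH'⟩ := (H.addApex (f ⁻¹' N)).exists_le_ncard_edgeSet_eq (m := 30)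
    (by rw [ncard_edgeSet_addApex]; omega)
  exact ⟨H', hH', (isMinorOf_addApex hf hhom (connected_induce_componentAvoiding hv)
    disjoint_componentAvoiding fun i hi => hi.2).mono hle⟩
end

section
/- Every simple graph on 9 vertices with independence number at most 2 contains $K_4$ as a subgraph, i.e., contains 4 pairwise adjacent vertices. -/
/-!
If `G` has no independent set of size three, the non-neighbours of any vertex form a clique,
so a vertex with at least four non-neighbours yields a `K₄`. By the handshake lemma some
vertex has an even number of non-neighbours (there are nine vertices), so otherwise some vertex
has at most two non-neighbours, hence at least six neighbours; by `R(3,3) = 6` these contain a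
triangle, which together with the vertex is a `K₄`.
-/

open SimpleGraph Finset

namespace SimpleGraph

variable {V : Type*} {G : SimpleGraph V}

lemma exists_even_degree_of_odd_card [Fintype V] [DecidableRel G.Adj]
    (h : Odd (Fintype.card V)) : ∃ v, Even (G.degree v) := by
  by_contra! hodd
  have hcard := G.even_card_odd_degree_vertices
  rw [filter_true_of_mem fun v _ => Nat.not_even_iff_odd.mp (hodd v), card_univ] at hcard
  exact Nat.not_even_iff_odd.mpr h hcard

namespace IndepSetFree

lemma exists_adj_of_card_eq {n : ℕ} (h : G.IndepSetFree n) {t : Finset V} (ht : #t = n) :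
    ∃ x ∈ t, ∃ y ∈ t, G.Adj x y := by
  by_contra! hnadj
  exact h t ⟨fun x hx y hy _ => hnadj x hx y hy, ht⟩

lemma isClique_compl_neighborSet (h : G.IndepSetFree 3) (v : V) :
    G.IsClique (Gᶜ.neighborSet v) :=
  G.isIndepSet_compl.mp (isIndepSet_neighborSet_of_triangleFree _ (G.cliqueFree_compl.mpr h) v)

lemma exists_isNClique_of_le_degree_compl [Fintype V] [DecidableEq V] [DecidableRel G.Adj]
    (h : G.IndepSetFree 3) {v : V} {n : ℕ} (hn : n ≤ Gᶜ.degree v) : ∃ s, G.IsNClique n s := by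
  rw [← card_neighborFinset_eq_degree] at hn
  obtain ⟨s, hs, rfl⟩ := exists_subset_card_eq hn
  refine ⟨s, (h.isClique_compl_neighborSet v).subset fun x hx => ?_, rfl⟩
  exact (mem_neighborFinset _ v x).mp (hs hx)

/-- A one-sided form of `R(3,3) ≤ 6`. -/
lemma exists_isNClique_three_subset [DecidableEq V] [DecidableRel G.Adj]
    (h : G.IndepSetFree 3) {s : Finset V} (hs : 6 ≤ #s) : ∃ t ⊆ s, G.IsNClique 3 t := by
  obtain ⟨w, hw⟩ := card_pos.mp (by omega : 0 < #s)
  set nbrs := (s.erase w).filter (G.Adj w)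
  set nonNbrs := (s.erase w).filter (¬G.Adj w ·)
  have hsplit : #nbrs + #nonNbrs = #s - 1 := by
    rw [card_filter_add_card_filter_not, card_erase_of_mem hw]
  rcases (by omega : 3 ≤ #nbrs ∨ 3 ≤ #nonNbrs) with hnbrs | hnonNbrs
  · obtain ⟨t, hts, htc⟩ := exists_subset_card_eq hnbrs
    obtain ⟨x, hx, y, hy, hxy⟩ := h.exists_adj_of_card_eq htc
    have hx' := mem_filter.mp (hts hx)
    have hy' := mem_filter.mp (hts hy)
    refine ⟨{w, x, y}, ?_, is3Clique_triple_iff.mpr ⟨hx'.2, hy'.2, hxy⟩⟩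
    simp only [insert_subset_iff, singleton_subset_iff]
    exact ⟨hw, mem_of_mem_erase hx'.1, mem_of_mem_erase hy'.1⟩
  · obtain ⟨t, hts, htc⟩ := exists_subset_card_eq hnonNbrs
    refine ⟨t, fun x hx => mem_of_mem_erase (mem_filter.mp (hts hx)).1, ?_, htc⟩
    refine (h.isClique_compl_neighborSet w).subset fun x hx => ?_
    obtain ⟨hxs, hwx⟩ := mem_filter.mp (hts hx)
    exact (compl_adj G w x).mpr ⟨(ne_of_mem_erase hxs).symm, hwx⟩

lemma exists_isNClique_four_of_six_le_degree [Fintype V] [DecidableEq V] [DecidableRel G.Adj]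
    (h : G.IndepSetFree 3) {v : V} (hv : 6 ≤ G.degree v) : ∃ s, G.IsNClique 4 s := by
  rw [← card_neighborFinset_eq_degree] at hv
  obtain ⟨t, hts, ht⟩ := h.exists_isNClique_three_subset hv
  exact ⟨insert v t, ht.insert fun b hb => (mem_neighborFinset G v b).mp (hts hb)⟩

end IndepSetFree

end SimpleGraph

/-- Every graph on 9 vertices with independence number at most 2 contains `K₄`
as a subgraph (an instance of `R(4,3) = 9`). -/
theorem K4_of_nine_vertices_indep_le_two
    {V : Type*} [Fintype V] (G : SimpleGraph V)
    (hcard : Fintype.card V = 9)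
    (hindep : ∀ s : Finset V, (∀ a ∈ s, ∀ b ∈ s, a ≠ b → ¬ G.Adj a b) → s.card ≤ 2) :
    ∃ s : Finset V, G.IsNClique 4 s := by
  classical
  have hG : G.IndepSetFree 3 := fun t ht => by
    have := hindep t fun a ha b hb hab => ht.isIndepSet ha hb hab
    have := ht.card_eq
    omega
  obtain ⟨v, hv⟩ := Gᶜ.exists_even_degree_of_odd_card (by rw [hcard]; decide)
  by_cases h4 : 4 ≤ Gᶜ.degree v
  · exact hG.exists_isNClique_of_le_degree_compl h4
  · have hne3 : Gᶜ.degree v ≠ 3 := fun h3 => by rw [h3] at hv; exact absurd hv (by decide)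
    have hcompl := G.degree_compl (v := v)
    exact hG.exists_isNClique_four_of_six_le_degree (v := v) (by omega)
end

section
/- Let $H$ be a simple graph on 8 or 9 vertices with minimum degree at least 5. Then there exists a vertex $v$ of $H$ such that $H \setminus v$ has a $\mathcal{K}_7^{-6}$ minor, i.e., $H \setminus v$ has an $F$ minor for some graph $F$ obtained from $K_7$ by deleting 6 edges. -/
open SimpleGraph

/-- `G` has a `𝒦₇⁻⁶` minor: a minor isomorphic to `K₇` with 6 edges deleted,
i.e. a graph on 7 vertices with exactly `21 - 6 = 15` edges. -/
def HasK76Minor {α : Type*} (G : SimpleGraph α) : Prop :=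
  ∃ F : SimpleGraph (Fin 7), F.edgeSet.ncard = 15 ∧ IsMinorOf F G

/-!
Delete a vertex `v` of minimum degree `δ ≥ 5`. Since `H` has at least `nδ/2` edges, `H - v` keeps
at least `3δ ≥ 15` of them when `n = 8`, and on 7 vertices that is already the minor. When `n = 9`,
`H - v` has 8 vertices, minimum degree at least 4 and at least 18 edges. Contracting an edge `ab`
loses only `1 + |N(a) ∩ N(b)|` of its `e` edges, and some edge has `|N(a) ∩ N(b)| ≤ e - 16`:
otherwise `e = 18`, a vertex `a` of minimum degree 4 spans a `K₅` with its neighbourhood, and the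
three vertices outside it, of degree at least 4, force a 19th edge.
-/

section Minors

variable {α β : Type*}

namespace IsMinorOf

theorem of_isContained {γ : Type*} {G : SimpleGraph α} {F : SimpleGraph β} {F' : SimpleGraph γ}
    (h : IsMinorOf F G) (hF : F' ⊑ F) : IsMinorOf F' G := by
  obtain ⟨c⟩ := hF
  obtain ⟨f, hne, hconn, hdisj, hadj⟩ := h
  exact ⟨f ∘ c, fun _ => hne _, fun _ => hconn _, fun _ _ hxy => hdisj (c.injective.ne hxy),
    fun _ _ hxy => hadj (c.toHom.map_adj hxy)⟩

end IsMinorOf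

theorem isMinorOf_map {G : SimpleGraph α} {π : α → β}
    (hπ : ∀ y, (G.induce (π ⁻¹' {y})).Connected) : IsMinorOf (G.map π) G :=
  ⟨fun y => π ⁻¹' {y}, fun y => Set.nonempty_coe_sort.mp (hπ y).nonempty, hπ,
    fun _ _ hyz => (Set.disjoint_singleton.mpr hyz).preimage π,
    fun _ _ ⟨_, u, v, huv, hu, hv⟩ => ⟨u, hu, v, hv, huv⟩⟩

theorem SimpleGraph.induce_singleton_connected (G : SimpleGraph α) (a : α) :
    (G.induce {a}).Connected := by
  rw [induce_singleton_eq_top]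
  exact connected_top

theorem isMinorOf_refl (G : SimpleGraph α) : IsMinorOf G G := by
  simpa using isMinorOf_map (G := G) (π := id) fun y => G.induce_singleton_connected y

theorem hasK76Minor_of_isMinorOf [Fintype β] {G : SimpleGraph α} {F : SimpleGraph β}
    (hβ : Fintype.card β = 7) (hF : 15 ≤ F.edgeSet.ncard) (h : IsMinorOf F G) :
    HasK76Minor G := by
  obtain ⟨S, hSF, hS⟩ := Set.exists_subset_card_eq hF
  have hSdiag : S \ Sym2.diagSet = S :=
    sdiff_eq_left.mpr <| Set.disjoint_left.mpr fun _ he => F.not_isDiag_of_mem_edgeSet (hSF he)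
  let iso := (fromEdgeSet S).overFinIso hβ
  refine ⟨(fromEdgeSet S).overFin hβ, ?_, h.of_isContained ?_⟩
  · rw [← Nat.card_coe_set_eq, ← Nat.card_congr iso.mapEdgeSet, Nat.card_coe_set_eq,
      edgeSet_fromEdgeSet, hSdiag, hS]
  · exact iso.symm.isContained.trans (.of_le ((fromEdgeSet_le F).mpr (Set.sdiff_subset.trans hSF)))

end Minors

namespace SimpleGraph

open Finset

variable {α : Type*}

theorem ncard_edgeSet_eq_card_edgeFinset (G : SimpleGraph α) [Fintype G.edgeSet] :
    G.edgeSet.ncard = #G.edgeFinset :=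
  Set.ncard_eq_toFinset_card' _

theorem ncard_neighborSet_eq_degree (G : SimpleGraph α) (v : α) [Fintype (G.neighborSet v)] :
    (G.neighborSet v).ncard = G.degree v := by
  rw [← card_neighborSet_eq_degree, ← Nat.card_eq_fintype_card, Nat.card_coe_set_eq]

theorem card_mul_le_two_mul_ncard_edgeSet [Fintype α] (G : SimpleGraph α) [DecidableRel G.Adj]
    {δ : ℕ} (hδ : ∀ v, δ ≤ G.degree v) : Fintype.card α * δ ≤ 2 * G.edgeSet.ncard := by
  rw [ncard_edgeSet_eq_card_edgeFinset, ← sum_degrees_eq_twice_card_edges, ← smul_eq_mul,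
    ← card_univ, ← sum_const]
  exact sum_le_sum fun v _ => hδ v

section VertexDeletion

variable [Fintype α] [DecidableEq α] (G : SimpleGraph α) [DecidableRel G.Adj]

theorem ncard_edgeSet_induce_ne (v : α) :
    (G.induce {x | x ≠ v}).edgeSet.ncard = G.edgeSet.ncard - G.degree v := by
  rw [← Set.compl_singleton_eq, ncard_edgeSet_eq_card_edgeFinset, ncard_edgeSet_eq_card_edgeFinset]
  exact (G.card_edgeFinset_induce_compl_singleton v).trans (G.card_edgeFinset_deleteIncidenceSet v)

theorem degree_le_degree_induce_ne_add_one {v : α} (w : {x | x ≠ v}) :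
    G.degree w ≤ (G.induce {x | x ≠ v}).degree w + 1 := by
  have hsub : G.neighborFinset w ⊆
      insert v (((G.induce {x | x ≠ v}).neighborFinset w).map (Function.Embedding.subtype _)) := by
    intro x hx
    rw [mem_neighborFinset] at hx
    by_cases hxv : x = v
    · rw [hxv]
      exact mem_insert_self _ _
    · exact mem_insert_of_mem (mem_map.mpr ⟨⟨x, hxv⟩, by simpa using hx, rfl⟩)
  calc G.degree w = #(G.neighborFinset w) := (card_neighborFinset_eq_degree _ _).symm
    _ ≤ _ := (card_le_card hsub).trans (card_insert_le _ _)
    _ = _ := by rw [card_map, card_neighborFinset_eq_degree]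

end VertexDeletion

theorem degree_le_ncard_commonNeighbors_add_ncard_add_one [Fintype α] (G : SimpleGraph α)
    [DecidableRel G.Adj] (a b : α) :
    G.degree b ≤
      (G.commonNeighbors a b).ncard + {x | G.Adj b x ∧ x ≠ a ∧ ¬ G.Adj a x}.ncard + 1 := by
  have hsub : G.neighborSet b ⊆
      insert a (G.commonNeighbors a b ∪ {x | G.Adj b x ∧ x ≠ a ∧ ¬ G.Adj a x}) := by
    intro x hbx
    by_cases hxa : x = a
    · exact Or.inl hxa
    by_cases hax : G.Adj a x
    · exact Or.inr (Or.inl ⟨hax, hbx⟩)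
    · exact Or.inr (Or.inr ⟨hbx, hxa, hax⟩)
  calc G.degree b = (G.neighborSet b).ncard := (G.ncard_neighborSet_eq_degree b).symm
    _ ≤ (G.commonNeighbors a b ∪ {x | G.Adj b x ∧ x ≠ a ∧ ¬ G.Adj a x}).ncard + 1 :=
        (Set.ncard_le_ncard hsub).trans (Set.ncard_insert_le _ _)
    _ ≤ _ := by grw [Set.ncard_union_le]

section Contraction

variable [DecidableEq α] {a b : α}

/-- `G.map (contractTo hab)` is the contraction `G / ab`. -/
def contractTo (hab : a ≠ b) (x : α) : {x | x ≠ b} :=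
  if h : x = b then ⟨a, hab⟩ else ⟨x, h⟩

theorem contractTo_of_ne (hab : a ≠ b) {x : α} (hx : x ≠ b) : contractTo hab x = ⟨x, hx⟩ :=
  dif_neg hx

theorem contractTo_right (hab : a ≠ b) : contractTo hab b = ⟨a, hab⟩ :=
  dif_pos rfl

theorem induce_preimage_contractTo_connected {G : SimpleGraph α} (hab : G.Adj a b)
    (y : {x | x ≠ b}) : (G.induce (contractTo hab.ne ⁻¹' {y})).Connected := by
  by_cases hy : y.1 = a
  · have : contractTo hab.ne ⁻¹' {y} = {a, b} := by
      ext x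
      simp only [Set.mem_preimage, Set.mem_singleton_iff, Set.mem_insert_iff, contractTo,
        Subtype.ext_iff]
      grind
    rw [this]
    exact induce_pair_connected_of_adj hab
  · have : contractTo hab.ne ⁻¹' {y} = {y.1} := by
      ext x
      simp only [Set.mem_preimage, Set.mem_singleton_iff, contractTo, Subtype.ext_iff]
      grind
    rw [this]
    exact G.induce_singleton_connected _

/-- The edges of `G - b` and the edges `a x` for the neighbours `x` of `b` outside `N[a]` are
distinct edges of `G / ab`. -/
theorem ncard_edgeSet_le_map_contractTo [Fintype α] {G : SimpleGraph α} [DecidableRel G.Adj]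
    (hab : G.Adj a b) :
    G.edgeSet.ncard ≤
      (G.map (contractTo hab.ne)).edgeSet.ncard + (G.commonNeighbors a b).ncard + 1 := by
  have hdeg := G.degree_le_ncard_commonNeighbors_add_ncard_add_one a b
  set π := contractTo hab.ne
  set B : Set α := {x | G.Adj b x ∧ x ≠ a ∧ ¬ G.Adj a x}
  have hπ_of_ne {x : α} (hx : x ≠ b) : π x = ⟨x, hx⟩ := contractTo_of_ne hab.ne hx
  have hπa : π a = ⟨a, hab.ne⟩ := hπ_of_ne hab.ne
  have hle : G.induce {x | x ≠ b} ≤ G.map π := fun x y hxy =>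
    ⟨hxy.ne, x, y, hxy, hπ_of_ne x.2, hπ_of_ne y.2⟩
  have hB_injOn : Set.InjOn (fun x => s(π a, π x)) B := by
    intro x hx y hy hxy
    have := Sym2.congr_right.mp hxy
    rwa [hπ_of_ne hx.1.ne', hπ_of_ne hy.1.ne', Subtype.mk.injEq] at this
  have hB_map : (fun x => s(π a, π x)) '' B ⊆ (G.map π).edgeSet := by
    rintro _ ⟨x, ⟨hbx, hxa, -⟩, rfl⟩
    refine ⟨?_, b, x, hbx, ?_, rfl⟩
    · rw [hπa, hπ_of_ne hbx.ne', Ne, Subtype.mk.injEq]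
      exact hxa.symm
    · rw [hπa]
      exact contractTo_right hab.ne
  have hdisj : Disjoint (G.induce {x | x ≠ b}).edgeSet ((fun x => s(π a, π x)) '' B) := by
    rw [Set.disjoint_right]
    rintro _ ⟨x, ⟨hbx, -, hax⟩, rfl⟩ hmem
    rw [mem_edgeSet, hπa, hπ_of_ne hbx.ne'] at hmem
    exact hax hmem
  have hmap : (G.induce {x | x ≠ b}).edgeSet.ncard + B.ncard ≤ (G.map π).edgeSet.ncard := by
    rw [← hB_injOn.ncard_image, ← Set.ncard_union_eq hdisj]
    exact Set.ncard_le_ncard (Set.union_subset (edgeSet_mono hle) hB_map)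
  have hinduce := G.ncard_edgeSet_induce_ne b
  have hdeg_le : G.degree b ≤ G.edgeSet.ncard :=
    (G.ncard_edgeSet_eq_card_edgeFinset).symm ▸ G.degree_le_card_edgeFinset b
  omega

end Contraction

theorem isClique_insert_neighborSet {G : SimpleGraph α} {a : α} [Fintype (G.neighborSet a)]
    (h : ∀ c, G.Adj a c → G.degree a ≤ (G.commonNeighbors a c).ncard + 1) :
    G.IsClique (insert a (G.neighborSet a)) := by
  refine isClique_insert.mpr ⟨fun c hc x hx hcx => ?_, fun _ hc _ => hc⟩
  have hsub : G.commonNeighbors a c ⊆ G.neighborSet a \ {c} := fun y hy =>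
    ⟨hy.1, fun hyc => G.notMem_commonNeighbors_right a c (hyc ▸ hy)⟩
  have heq := Set.eq_of_subset_of_ncard_le hsub (by
    rw [Set.ncard_sdiff_singleton_of_mem hc, ncard_neighborSet_eq_degree]
    have := h c hc
    omega)
  have hx' : x ∈ G.commonNeighbors a c := heq ▸ ⟨hx, hcx.symm⟩
  exact ((G.mem_commonNeighbors).mp hx').2

section Counting

variable [Fintype α] [DecidableEq α] {G : SimpleGraph α} [DecidableRel G.Adj]

theorem sum_card_neighborFinset_inter_comm (s t : Finset α) :
    ∑ x ∈ s, #(G.neighborFinset x ∩ t) = ∑ y ∈ t, #(G.neighborFinset y ∩ s) := by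
  have h (x : α) (u : Finset α) : G.neighborFinset x ∩ u = u.filter (G.Adj x) := by
    ext y
    simp [and_comm]
  simp_rw [h]
  refine (sum_card_bipartiteAbove_eq_sum_card_bipartiteBelow (r := G.Adj)).trans ?_
  simp_rw [bipartiteBelow, adj_comm]

theorem IsNClique.two_mul_ncard_edgeSet_lower_bound {s : Finset α} {k δ : ℕ}
    (hs : G.IsNClique k s) (hδ : ∀ v, δ ≤ G.degree v) :
    k * (k - 1) + #sᶜ * (2 * δ + 1) ≤ 2 * G.edgeSet.ncard + #sᶜ * #sᶜ := by
  obtain ⟨hs, rfl⟩ := hs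
  have hsplit (x : α) : #(G.neighborFinset x ∩ s) + #(G.neighborFinset x ∩ sᶜ) = G.degree x := by
    rw [← card_union_of_disjoint (disjoint_compl_right.mono inter_subset_right inter_subset_right),
      ← inter_union_distrib_left, union_compl, inter_univ, card_neighborFinset_eq_degree]
  have hinside (x : α) (hx : x ∈ s) : #s - 1 ≤ #(G.neighborFinset x ∩ s) := by
    rw [← card_erase_of_mem hx]
    refine card_le_card fun y hy => ?_
    obtain ⟨hyx, hys⟩ := mem_erase.mp hy
    exact mem_inter.mpr ⟨(mem_neighborFinset _ _ _).mpr (hs hx hys hyx.symm), hys⟩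
  have houtside (t : α) (ht : t ∈ sᶜ) : #(G.neighborFinset t ∩ sᶜ) + 1 ≤ #sᶜ := by
    rw [← card_erase_add_one ht]
    refine Nat.add_le_add_right (card_le_card fun y hy => ?_) 1
    obtain ⟨hty, hys⟩ := mem_inter.mp hy
    exact mem_erase.mpr ⟨(G.ne_of_adj ((mem_neighborFinset _ _ _).mp hty)).symm, hys⟩
  have hS : #s * (#s - 1) + ∑ x ∈ s, #(G.neighborFinset x ∩ sᶜ) ≤ ∑ x ∈ s, G.degree x := by
    rw [← smul_eq_mul, ← sum_const, ← sum_add_distrib]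
    exact sum_le_sum fun x hx => hsplit x ▸ Nat.add_le_add_right (hinside x hx) _
  have hT : #sᶜ * (2 * δ + 1) ≤
      ∑ t ∈ sᶜ, G.degree t + ∑ t ∈ sᶜ, #(G.neighborFinset t ∩ s) + #sᶜ * #sᶜ := by
    calc #sᶜ * (2 * δ + 1) = ∑ _t ∈ sᶜ, (2 * δ + 1) := by rw [sum_const, smul_eq_mul]
      _ ≤ ∑ t ∈ sᶜ, (G.degree t + #(G.neighborFinset t ∩ s) + #sᶜ) := by
          refine sum_le_sum fun t ht => ?_
          have := hsplit t
          have := houtside t ht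
          have := hδ t
          omega
      _ = _ := by rw [sum_add_distrib, sum_add_distrib, sum_const, smul_eq_mul]
  have hdouble := G.sum_card_neighborFinset_inter_comm s sᶜ
  have hsum := sum_add_sum_compl s fun v => G.degree v
  have := G.sum_degrees_eq_twice_card_edges
  rw [ncard_edgeSet_eq_card_edgeFinset]
  omega

theorem exists_adj_ncard_commonNeighbors_add_le (hα : Fintype.card α = 8)
    (hδ : ∀ v, 4 ≤ G.degree v) (he : 18 ≤ G.edgeSet.ncard) :
    ∃ a b, G.Adj a b ∧ (G.commonNeighbors a b).ncard + 16 ≤ G.edgeSet.ncard := by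
  by_contra! h
  have : Nonempty α := Fintype.card_pos_iff.mp (by omega)
  obtain ⟨a, ha⟩ := G.exists_minimal_degree_vertex
  have hcodeg (c : α) (hac : G.Adj a c) : (G.commonNeighbors a c).ncard < G.degree a := by
    rw [← Nat.card_coe_set_eq, Nat.card_eq_fintype_card]
    exact hac.card_commonNeighbors_lt_degree
  obtain ⟨b, hab⟩ := (G.degree_pos_iff_exists_adj a).mp (by have := hδ a; omega)
  have hsum := G.card_mul_le_two_mul_ncard_edgeSet (ha ▸ G.minDegree_le_degree)
  rw [hα] at hsum
  have hab_many := h a b hab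
  have hab_few := hcodeg b hab
  have hdeg : G.degree a = 4 := by
    have := hδ a
    omega
  have hclique : G.IsNClique 5 (insert a (G.neighborFinset a)) := by
    refine ⟨?_, ?_⟩
    · rw [coe_insert, coe_neighborFinset]
      exact isClique_insert_neighborSet fun c hc => by have := h a c hc; omega
    · rw [card_insert_of_notMem (by simp), card_neighborFinset_eq_degree, hdeg]
  have := hclique.two_mul_ncard_edgeSet_lower_bound hδ
  rw [card_compl, hα, hclique.card_eq] at this
  omega

theorem hasK76Minor_of_card_eq_eight (hα : Fintype.card α = 8)
    (hδ : ∀ v, 4 ≤ G.degree v) (he : 18 ≤ G.edgeSet.ncard) : HasK76Minor G := by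
  obtain ⟨a, b, hab, hcodeg⟩ := exists_adj_ncard_commonNeighbors_add_le hα hδ he
  have hcard : Fintype.card {x | x ≠ b} = 7 := by rw [Set.card_ne_eq, hα]
  have hcontract := ncard_edgeSet_le_map_contractTo hab
  exact hasK76Minor_of_isMinorOf hcard (by omega)
    (isMinorOf_map (induce_preimage_contractTo_connected hab))

end Counting

end SimpleGraph

/-- Every graph on 8 or 9 vertices with minimum degree at least 5 has a vertex `v`
whose deletion leaves a graph with a `𝒦₇⁻⁶` minor. -/
theorem vertex_deletion_gives_K7_minus6_minor
    {V : Type*} [Fintype V] (H : SimpleGraph V) [DecidableRel H.Adj]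
    (hcard : Fintype.card V = 8 ∨ Fintype.card V = 9)
    (hdeg : ∀ v : V, 5 ≤ H.degree v) :
    ∃ v : V, HasK76Minor (H.induce {u | u ≠ v}) := by
  classical
  have : Nonempty V := Fintype.card_pos_iff.mp (by omega)
  obtain ⟨v, hv⟩ := H.exists_minimal_degree_vertex
  refine ⟨v, ?_⟩
  have hsum := H.card_mul_le_two_mul_ncard_edgeSet (hv ▸ H.minDegree_le_degree)
  have hedges := H.ncard_edgeSet_induce_ne v
  have hcard' : Fintype.card {u | u ≠ v} = Fintype.card V - 1 := Set.card_ne_eq v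
  have hδ := hdeg v
  rcases hcard with h8 | h9
  · exact hasK76Minor_of_isMinorOf (by omega) (by rw [h8] at hsum; omega) (isMinorOf_refl _)
  · refine hasK76Minor_of_card_eq_eight (by omega) (fun w => ?_) (by rw [h9] at hsum; omega)
    have := H.degree_le_degree_induce_ne_add_one w
    have := hdeg w
    omega
end

section
/- Let $k \ge 4$ be an integer and let $G$ be a $k$-contraction-critical graph. Then for every vertex $v$ of $G$, the independence number of the subgraph of $G$ induced on the neighborhood $N(v)$ satisfies $\alpha(G[N(v)]) \le d(v) - k + 2$, where $d(v)$ is the degree of $v$. -/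
/-!
Let `s ⊆ N(v)` be independent. If `s = ∅`, deleting `v` gives a proper minor; a `(k-1)`-colouring
of it extends to `v` unless `d(v) ≥ k - 1`. Otherwise contract the star `{v} ∪ s` to a single
vertex: the resulting minor is smaller, hence `(k-1)`-colourable, and since `s` is independent its
colouring pulls back to a proper colouring of `G - v` in which all of `s` shares one colour. Then
`N(v)` sees at most `d(v) - |s| + 1` colours, and if this is less than `k - 1` the colouring extends
to `v`, contradicting `χ(G) = k`.
-/

open SimpleGraph

/-- `G` is `k`-contraction-critical: `χ(G) = k` and every proper minor of `G`
(a minor not isomorphic to `G`) is `(k-1)`-colorable. -/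
def IsContractionCritical (k : ℕ) {V : Type} (G : SimpleGraph V) : Prop :=
  G.chromaticNumber = k ∧
    ∀ (W : Type) [Fintype W] (H : SimpleGraph W),
      IsMinorOf H G → ¬ Nonempty (G ≃g H) → H.Colorable (k - 1)

open Finset

section collapse

variable {V : Type*} [DecidableEq V] (s : Finset V) {r : V} (hr : r ∉ s)

def collapseOnto : V → {u // u ∉ s} :=
  fun u => if hu : u ∈ s then ⟨r, hr⟩ else ⟨u, hu⟩

variable {s hr}

lemma collapseOnto_surjective : Function.Surjective (collapseOnto s hr) :=
  fun x => ⟨x, by simp [collapseOnto, x.2]⟩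

lemma preimage_collapseOnto_singleton (x : {u // u ∉ s}) :
    collapseOnto s hr ⁻¹' {x} = if x.1 = r then insert r (s : Set V) else {x.1} := by
  ext u
  obtain ⟨x, hx⟩ := x
  simp only [Set.mem_preimage, Set.mem_singleton_iff, collapseOnto, Subtype.ext_iff]
  split_ifs <;> grind

lemma eq_or_mem_of_collapseOnto_eq {a b : V} (ha : a ≠ r) (hb : b ≠ r)
    (h : collapseOnto s hr a = collapseOnto s hr b) : a = b ∨ a ∈ s ∧ b ∈ s := by
  unfold collapseOnto at h
  split_ifs at h <;> simp_all [Subtype.ext_iff]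

lemma card_image_collapseOnto_le (t : Finset V) :
    #(t.image (collapseOnto s hr)) ≤ #(t \ s) + 1 := by
  have : t.image (collapseOnto s hr) ⊆ insert ⟨r, hr⟩ ((t \ s).image (collapseOnto s hr)) := by
    intro x hx
    obtain ⟨u, hu, rfl⟩ := mem_image.1 hx
    by_cases hus : u ∈ s
    · simp [collapseOnto, hus]
    · exact mem_insert_of_mem (mem_image_of_mem _ (mem_sdiff.2 ⟨hu, hus⟩))
  exact (card_le_card this).trans ((card_insert_le _ _).trans (by gcongr; exact card_image_le))

end collapse

namespace SimpleGraph

variable {V W : Type*} {G : SimpleGraph V}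

def contract (G : SimpleGraph V) (f : V → W) : SimpleGraph W :=
  fromRel fun x y => ∃ a b, f a = x ∧ f b = y ∧ G.Adj a b

lemma contract_adj_apply {f : V → W} {a b : V} (hab : G.Adj a b) (hf : f a ≠ f b) :
    (G.contract f).Adj (f a) (f b) :=
  (fromRel_adj _ _ _).2 ⟨hf, Or.inl ⟨a, b, rfl, rfl, hab⟩⟩

lemma isMinorOf_contract {f : V → W} (hf : Function.Surjective f)
    (hconn : ∀ x, (G.induce (f ⁻¹' {x})).Connected) : IsMinorOf (G.contract f) G := by
  refine ⟨fun x => f ⁻¹' {x}, fun x => ?_, hconn, fun x y hxy => ?_, fun x y hxy => ?_⟩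
  · obtain ⟨a, rfl⟩ := hf x
    exact ⟨a, rfl⟩
  · exact Set.disjoint_left.2 fun a hx hy => hxy (hx.symm.trans hy)
  · obtain ⟨-, ⟨a, b, rfl, rfl, hab⟩ | ⟨b, a, rfl, rfl, hba⟩⟩ := (fromRel_adj _ _ _).1 hxy
    · exact ⟨a, rfl, b, rfl, hab⟩
    · exact ⟨a, rfl, b, rfl, hba.symm⟩

lemma isMinorOf_induce (s : Set V) : IsMinorOf (G.induce s) G := by
  refine ⟨fun x => {x.1}, fun x => Set.singleton_nonempty _, fun x => ?_,
    fun x y hxy => Set.disjoint_singleton.2 (Subtype.coe_injective.ne hxy),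
    fun x y hxy => ⟨x, rfl, y, rfl, hxy⟩⟩
  rw [induce_singleton_eq_top]
  exact connected_top

lemma induce_insert_connected_of_subset_neighborSet {v : V} {s : Set V}
    (hs : s ⊆ G.neighborSet v) : (G.induce (insert v s)).Connected := by
  refine G.induce_connected_of_patches v (Set.mem_insert _ _) fun {u} hu => ?_
  rcases Set.mem_insert_iff.1 hu with rfl | hu
  · exact ⟨{u}, by simp, rfl, rfl, .rfl⟩
  · exact ⟨{v, u}, Set.insert_subset_insert (Set.singleton_subset_iff.2 hu), by simp, by simp,
      (induce_pair_connected_of_adj (hs hu)).preconnected _ _⟩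

lemma colorable_of_card_image_neighborFinset_lt {n : ℕ} {v : V} [Fintype (G.neighborSet v)]
    (C : V → Fin n) (hC : ∀ ⦃a b⦄, a ≠ v → b ≠ v → G.Adj a b → C a ≠ C b)
    (hN : #((G.neighborFinset v).image C) < n) : G.Colorable n := by
  classical
  obtain ⟨c, -, hc⟩ := exists_mem_notMem_of_card_lt_card
    (t := (univ : Finset (Fin n))) (by simpa using hN)
  have hfree : ∀ u, G.Adj v u → C u ≠ c := fun u hu hcu =>
    hc (hcu ▸ mem_image_of_mem C ((mem_neighborFinset G v u).2 hu))
  refine ⟨Coloring.mk (Function.update C v c) fun {a b} hab => ?_⟩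
  rcases eq_or_ne a v with rfl | ha
  · simpa [hab.ne'] using (hfree b hab).symm
  rcases eq_or_ne b v with rfl | hb
  · simpa [ha] using hfree a hab.symm
  · simpa [ha, hb] using hC ha hb hab

lemma induce_preimage_collapseOnto_connected [DecidableEq V] {s : Finset V} {v : V} (hv : v ∉ s)
    (hs : (s : Set V) ⊆ G.neighborSet v) (x : {u // u ∉ s}) :
    (G.induce (collapseOnto s hv ⁻¹' {x})).Connected := by
  by_cases hx : x.1 = v
  · rw [preimage_collapseOnto_singleton, if_pos hx]
    exact induce_insert_connected_of_subset_neighborSet hs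
  · rw [preimage_collapseOnto_singleton, if_neg hx, induce_singleton_eq_top]
    exact connected_top

end SimpleGraph

namespace IsContractionCritical

variable {k : ℕ} {V : Type} {G : SimpleGraph V}

lemma not_colorable [Nonempty V] (hG : IsContractionCritical k G) : ¬ G.Colorable (k - 1) := by
  intro h
  have hpos := h.chromaticNumber_pos
  have hle := h.chromaticNumber_le
  rw [hG.1] at hpos hle
  norm_cast at hpos hle
  omega

lemma colorable_of_isMinorOf [Fintype V] (hG : IsContractionCritical k G) {W : Type} [Fintype W]
    {H : SimpleGraph W} (hH : IsMinorOf H G) (hcard : Fintype.card W < Fintype.card V) :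
    H.Colorable (k - 1) :=
  hG.2 W H hH fun ⟨e⟩ => hcard.ne' (Fintype.card_congr e.toEquiv)

lemma le_degree_add_one [Fintype V] [DecidableRel G.Adj] (hG : IsContractionCritical k G)
    (v : V) : k ≤ G.degree v + 1 := by
  classical
  by_contra! hlt
  obtain ⟨c⟩ := hG.colorable_of_isMinorOf (isMinorOf_induce {v}ᶜ)
    (Fintype.card_subtype_lt (x := v) (by simp))
  have : Nonempty V := ⟨v⟩
  refine hG.not_colorable (colorable_of_card_image_neighborFinset_lt (v := v)
    (fun u => if hu : u = v then ⟨0, by omega⟩ else c ⟨u, hu⟩) (fun a b ha hb hab => ?_) ?_)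
  · simpa [ha, hb] using c.valid (show (G.induce {v}ᶜ).Adj ⟨a, ha⟩ ⟨b, hb⟩ from hab)
  · exact card_image_le.trans_lt (by rw [card_neighborFinset_eq_degree]; omega)

end IsContractionCritical

theorem indep_in_neighborhood_of_contraction_critical_general
    (k : ℕ) {V : Type} [Fintype V] (G : SimpleGraph V)
    [DecidableRel G.Adj]
    (hG : IsContractionCritical k G) (v : V)
    (s : Finset V) (hs : (s : Set V) ⊆ G.neighborSet v)
    (hindep : ∀ a ∈ s, ∀ b ∈ s, a ≠ b → ¬ G.Adj a b) :
    s.card + k ≤ G.degree v + 2 := by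
  classical
  obtain rfl | ⟨u, hu⟩ := s.eq_empty_or_nonempty
  · simpa using (hG.le_degree_add_one v).trans (Nat.le_succ _)
  have hv : v ∉ s := fun h => G.irrefl (hs h)
  have hsN : s ⊆ G.neighborFinset v := fun a ha => (mem_neighborFinset G v a).2 (hs ha)
  obtain ⟨c⟩ := hG.colorable_of_isMinorOf
    (isMinorOf_contract collapseOnto_surjective (induce_preimage_collapseOnto_connected hv hs))
    (Fintype.card_subtype_lt (x := u) (not_not.2 hu))
  have : Nonempty V := ⟨v⟩
  by_contra! hlt
  refine hG.not_colorable (colorable_of_card_image_neighborFinset_lt (v := v)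
    (c ∘ collapseOnto s hv) (fun a b ha hb hab => c.valid (contract_adj_apply hab fun h => ?_)) ?_)
  · obtain rfl | ⟨has, hbs⟩ := eq_or_mem_of_collapseOnto_eq ha hb h
    · exact G.irrefl hab
    · exact hindep a has b hbs hab.ne hab
  · have hsdeg : #s ≤ G.degree v := G.card_neighborFinset_eq_degree v ▸ card_le_card hsN
    calc #((G.neighborFinset v).image (c ∘ collapseOnto s hv))
        ≤ #((G.neighborFinset v).image (collapseOnto s hv)) := by
          rw [← image_image]; exact card_image_le
      _ ≤ #(G.neighborFinset v \ s) + 1 := card_image_collapseOnto_le _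
      _ = G.degree v - #s + 1 := by rw [card_sdiff_of_subset hsN, card_neighborFinset_eq_degree]
      _ < k - 1 := by omega

/-- Dirac: in a `k`-contraction-critical graph (`k ≥ 4`), for every vertex `v`,
every independent set in the neighborhood of `v` has size at most `d(v) - k + 2`. -/
theorem indep_in_neighborhood_of_contraction_critical
    (k : ℕ) (hk : 4 ≤ k) {V : Type} [Fintype V] (G : SimpleGraph V)
    [DecidableRel G.Adj]
    (hG : IsContractionCritical k G) (v : V)
    (s : Finset V) (hs : (s : Set V) ⊆ G.neighborSet v)
    (hindep : ∀ a ∈ s, ∀ b ∈ s, a ≠ b → ¬ G.Adj a b) :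
    s.card + k ≤ G.degree v + 2 :=
  indep_in_neighborhood_of_contraction_critical_general k G hG v s hs hindep
end

section
/- Let $H$ be a simple graph on 9 vertices with independence number exactly 2, no $K_5$ subgraph, and suppose $H$ is edge-minimal with these properties (i.e., for every edge $e$ of $H$, the graph $H - e$ either contains $K_5$ or has independence number greater than 2). Then $H$ has no dominating edge, i.e., for every edge $xy$ of $H$ there exists a vertex $z \notin \{x,y\}$ adjacent to neither $x$ nor $y$. -/
/-!
Delete an edge `xy`. The smaller graph is still `K₅`-free, so by minimality it has an
independent triple. That triple is not independent in `H`, so it must contain both `x` and `y`;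
its third vertex is adjacent to neither of them, because `xy` is the only edge that was removed.
-/

namespace SimpleGraph

variable {V : Type*} {G : SimpleGraph V} {x y z w : V}

lemma Adj.deleteEdges_singleton (h : G.Adj z w) (hz : z ≠ x ∧ z ≠ y) :
    (G.deleteEdges {s(x, y)}).Adj z w := by
  refine (deleteEdges_adj ..).2 ⟨h, fun hmem => ?_⟩
  rcases Sym2.eq_iff.1 (Set.mem_singleton_iff.1 hmem) with ⟨hzx, -⟩ | ⟨hzy, -⟩
  exacts [hz.1 hzx, hz.2 hzy]

lemma IsIndepSet.mem_of_deleteEdges_singleton {s : Set V}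
    (hs : (G.deleteEdges {s(x, y)}).IsIndepSet s) (hG : ¬ G.IsIndepSet s) : x ∈ s ∧ y ∈ s := by
  obtain ⟨a, ha, b, hb, hab, hadj⟩ : ∃ a ∈ s, ∃ b ∈ s, a ≠ b ∧ G.Adj a b := by
    simpa [IsIndepSet, Set.Pairwise] using hG
  have hedge : s(a, b) ∈ ({s(x, y)} : Set (Sym2 V)) :=
    not_not.1 fun h => hs ha hb hab ((deleteEdges_adj ..).2 ⟨hadj, h⟩)
  rcases Sym2.eq_iff.1 (Set.mem_singleton_iff.1 hedge) with ⟨rfl, rfl⟩ | ⟨rfl, rfl⟩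
  exacts [⟨ha, hb⟩, ⟨hb, ha⟩]

lemma exists_not_adj_of_isIndepSet_deleteEdges_singleton {s : Finset V} (hcard : 2 < s.card)
    (hs : (G.deleteEdges {s(x, y)}).IsIndepSet s) (hG : ¬ G.IsIndepSet s) :
    ∃ z, z ≠ x ∧ z ≠ y ∧ ¬ G.Adj z x ∧ ¬ G.Adj z y := by
  classical
  obtain ⟨hx, hy⟩ := hs.mem_of_deleteEdges_singleton hG
  obtain ⟨z, hzs, hzxy⟩ := Finset.exists_mem_notMem_of_card_lt_card
    (lt_of_le_of_lt (Finset.card_le_two (a := x) (b := y)) hcard)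
  have hz : z ≠ x ∧ z ≠ y := by simpa using hzxy
  exact ⟨z, hz.1, hz.2,
    fun h => hs hzs hx hz.1 (h.deleteEdges_singleton hz),
    fun h => hs hzs hy hz.2 (h.deleteEdges_singleton hz)⟩

end SimpleGraph

open SimpleGraph

theorem no_dominating_edge_general
    {V : Type*} (H : SimpleGraph V)
    (hindep : ∀ s : Finset V, (∀ a ∈ s, ∀ b ∈ s, a ≠ b → ¬ H.Adj a b) → s.card ≤ 2)
    (hK5 : H.CliqueFree 5)
    (hmin : ∀ e ∈ H.edgeSet,
      ¬ (H.deleteEdges {e}).CliqueFree 5 ∨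
        ∃ s : Finset V, s.card = 3 ∧
          ∀ a ∈ s, ∀ b ∈ s, a ≠ b → ¬ (H.deleteEdges {e}).Adj a b) :
    ∀ x y : V, H.Adj x y →
      ∃ z : V, z ≠ x ∧ z ≠ y ∧ ¬ H.Adj z x ∧ ¬ H.Adj z y := by
  intro x y hxy
  obtain ⟨s, hs3, hs⟩ :=
    (hmin s(x, y) hxy).resolve_left (not_not.2 (hK5.anti (H.deleteEdges_le _)))
  have hH : ¬ H.IsIndepSet s := fun h => by
    have := hindep s fun a ha b hb => h ha hb
    omega
  exact exists_not_adj_of_isIndepSet_deleteEdges_singleton (by omega)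
    (fun a ha b hb => hs a ha b hb) hH

/-- An edge-minimal graph on 9 vertices with independence number exactly 2 and no
`K₅` subgraph has no dominating edge. -/
theorem no_dominating_edge
    {V : Type*} [Fintype V] (H : SimpleGraph V)
    (hcard : Fintype.card V = 9)
    (hpair : ∃ a b : V, a ≠ b ∧ ¬ H.Adj a b)
    (hindep : ∀ s : Finset V, (∀ a ∈ s, ∀ b ∈ s, a ≠ b → ¬ H.Adj a b) → s.card ≤ 2)
    (hK5 : H.CliqueFree 5)
    (hmin : ∀ e ∈ H.edgeSet,
      ¬ (H.deleteEdges {e}).CliqueFree 5 ∨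
        ∃ s : Finset V, s.card = 3 ∧
          ∀ a ∈ s, ∀ b ∈ s, a ≠ b → ¬ (H.deleteEdges {e}).Adj a b) :
    ∀ x y : V, H.Adj x y →
      ∃ z : V, z ≠ x ∧ z ≠ y ∧ ¬ H.Adj z x ∧ ¬ H.Adj z y :=
  no_dominating_edge_general H hindep hK5 hmin
end

section
/- Let $G$ be a graph with a vertex $x$ of degree 6 such that the closed neighborhood $N[x]$ induces a complete graph $K_7$, and suppose $G$ contains two adjacent vertices $y, z$ outside $N[x]$ with at least 8 edges between $\{y,z\}$ and $N(x)$. Then $G$ has a $\mathcal{K}_9^{-6}$ minor. -/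
/-!
The nine vertices of `N[x] ∪ {y, z}` span at least `21 + 1 + 8 = 30` edges of `G`: `N[x]` and
`{y, z}` are cliques, and at least eight edges join them. Keeping exactly thirty of these edges
gives a subgraph of `G` on nine vertices, and a subgraph is a minor with singleton branch sets.
-/

open SimpleGraph

theorem Set.sym2_range {α β : Type*} (v : β → α) :
    (Set.range v).sym2 = Set.range (Sym2.map v) := by
  rw [← Set.image_univ, Set.sym2_image, Set.sym2_univ, Set.image_univ]

theorem Set.Finite.sym2 {α : Type*} {s : Set α} (hs : s.Finite) : s.sym2.Finite :=
  Set.sym2_eq_mk_image (s := s) ▸ (hs.prod hs).image _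

namespace SimpleGraph

variable {α β : Type*} {G : SimpleGraph α}

theorem IsContained.isMinorOf {H : SimpleGraph β} (h : H ⊑ G) : IsMinorOf H G := by
  obtain ⟨f⟩ := h
  refine ⟨fun b => {f b}, fun b => Set.singleton_nonempty _, fun b => ?_,
    fun b₁ b₂ hb => Set.disjoint_singleton.2 (f.injective.ne hb),
    fun b₁ b₂ hb => ⟨f b₁, rfl, f b₂, rfl, f.toHom.map_adj hb⟩⟩
  rw [induce_singleton_eq_top]
  exact connected_top

theorem edgeSet_comap_embedding (v : β ↪ α) (G : SimpleGraph α) :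
    (G.comap v).edgeSet = Sym2.map v ⁻¹' G.edgeSet := by
  ext e
  induction e using Sym2.ind
  simp

theorem exists_isContained_ncard_edgeSet_eq (v : β ↪ α) {m : ℕ}
    (hm : m ≤ (G.edgeSet ∩ (Set.range v).sym2).ncard) :
    ∃ H : SimpleGraph β, H.edgeSet.ncard = m ∧ H ⊑ G := by
  obtain ⟨E, hE, rfl⟩ := Set.exists_subset_card_eq hm
  have hEG : E ⊆ G.edgeSet := fun e he => (hE he).1
  refine ⟨(fromEdgeSet E).comap v, ?_, ?_⟩
  · have hEv : E ⊆ Set.range (Sym2.map v) := Set.sym2_range v ▸ fun e he => (hE he).2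
    have hEdiag : E \ Sym2.diagSet = E :=
      sdiff_eq_left.2 <| Set.disjoint_left.2 fun _ he => G.not_isDiag_of_mem_edgeSet (hEG he)
    rw [edgeSet_comap_embedding, edgeSet_fromEdgeSet, hEdiag,
      Set.ncard_preimage_of_injective_subset_range (Sym2.map.injective v.injective) hEv]
  · exact (IsContained.of_le fun a b h => hEG ((fromEdgeSet_adj E).1 h).1).trans'
      ⟨(Embedding.comap v _).toCopy⟩

theorem hasK96Minor_of_ncard_edgeSet_inter_sym2 {W : Set α} (hW : W.ncard = 9)
    (h : 30 ≤ (G.edgeSet ∩ W.sym2).ncard) : HasK96Minor G := by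
  have : Finite W := Set.finite_of_ncard_ne_zero (by omega)
  let e : W ≃ Fin 9 := (Finite.equivFin W).trans (finCongr hW)
  let v : Fin 9 ↪ α := e.symm.toEmbedding.trans (Function.Embedding.subtype _)
  have hv : Set.range v = W := by
    simp only [v, Function.Embedding.coe_trans, Equiv.coe_toEmbedding,
      Function.Embedding.coe_subtype]
    rw [e.symm.surjective.range_comp, Subtype.range_coe]
  obtain ⟨H, hH, hHG⟩ := exists_isContained_ncard_edgeSet_eq v (hv ▸ h)
  exact ⟨H, hH, hHG.isMinorOf⟩

theorem IsClique.edgeSet_inter_sym2_eq {s : Set α} (h : G.IsClique s) :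
    G.edgeSet ∩ s.sym2 = Sym2.mk.uncurry '' s.offDiag := by
  ext e
  induction e using Sym2.ind with | h a b => ?_
  simp only [Set.mem_inter_iff, mem_edgeSet, Set.mk_mem_sym2_iff, Set.mem_image, Set.mem_offDiag,
    Prod.exists, Function.uncurry_apply_pair, Sym2.eq_iff]
  constructor
  · rintro ⟨hab, ha, hb⟩
    exact ⟨a, b, ⟨ha, hb, hab.ne⟩, Or.inl ⟨rfl, rfl⟩⟩
  · rintro ⟨c, d, ⟨hc, hd, hcd⟩, ⟨rfl, rfl⟩ | ⟨rfl, rfl⟩⟩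
    · exact ⟨h hc hd hcd, hc, hd⟩
    · exact ⟨h hd hc hcd.symm, hd, hc⟩

theorem IsClique.ncard_edgeSet_inter_sym2 {s : Set α} (h : G.IsClique s) (hs : s.Finite) :
    (G.edgeSet ∩ s.sym2).ncard = s.ncard.choose 2 := by
  classical
  have : Sym2.mk.uncurry '' s.offDiag = ↑(hs.toFinset.offDiag.image Sym2.mk.uncurry) := by simp
  rw [h.edgeSet_inter_sym2_eq, this, Set.ncard_coe_finset, Sym2.card_image_offDiag,
    Set.ncard_eq_toFinset_card s hs]

theorem edgeSet_inter_sym2_union (A B : Set α) :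
    G.edgeSet ∩ (A ∪ B).sym2 = G.edgeSet ∩ A.sym2 ∪ G.edgeSet ∩ B.sym2 ∪
      Sym2.mk.uncurry '' {p : α × α | p.1 ∈ A ∧ p.2 ∈ B ∧ G.Adj p.1 p.2} := by
  ext e
  induction e using Sym2.ind with | h a b => ?_
  simp only [Set.mem_inter_iff, mem_edgeSet, Set.mk_mem_sym2_iff, Set.mem_union, Set.mem_image,
    Prod.exists, Function.uncurry_apply_pair, Sym2.eq_iff, Set.mem_ofPred_eq]
  constructor
  · rintro ⟨hab, ha | ha, hb | hb⟩
    · exact Or.inl (Or.inl ⟨hab, ha, hb⟩)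
    · exact Or.inr ⟨a, b, ⟨ha, hb, hab⟩, Or.inl ⟨rfl, rfl⟩⟩
    · exact Or.inr ⟨b, a, ⟨hb, ha, hab.symm⟩, Or.inr ⟨rfl, rfl⟩⟩
    · exact Or.inl (Or.inr ⟨hab, ha, hb⟩)
  · rintro ((⟨hab, ha, hb⟩ | ⟨hab, ha, hb⟩) | ⟨c, d, ⟨hc, hd, hcd⟩, ⟨rfl, rfl⟩ | ⟨rfl, rfl⟩⟩)
    · exact ⟨hab, Or.inl ha, Or.inl hb⟩
    · exact ⟨hab, Or.inr ha, Or.inr hb⟩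
    · exact ⟨hcd, Or.inl hc, Or.inr hd⟩
    · exact ⟨hcd.symm, Or.inr hd, Or.inl hc⟩

theorem ncard_edgeSet_inter_sym2_union {A B : Set α} (hA : A.Finite) (hB : B.Finite)
    (hAB : Disjoint A B) :
    (G.edgeSet ∩ (A ∪ B).sym2).ncard = (G.edgeSet ∩ A.sym2).ncard + (G.edgeSet ∩ B.sym2).ncard +
      {p : α × α | p.1 ∈ A ∧ p.2 ∈ B ∧ G.Adj p.1 p.2}.ncard := by
  set P := {p : α × α | p.1 ∈ A ∧ p.2 ∈ B ∧ G.Adj p.1 p.2}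
  have hinj : Set.InjOn Sym2.mk.uncurry P := by
    rintro ⟨a, b⟩ ⟨ha, hb, -⟩ ⟨c, d⟩ ⟨hc, -, -⟩ h
    rcases Sym2.eq_iff.1 h with ⟨rfl, rfl⟩ | ⟨-, hbc⟩
    · rfl
    · exact (Set.disjoint_left.1 hAB (hbc ▸ hc) hb).elim
  have hdisjAB : Disjoint (G.edgeSet ∩ A.sym2) (G.edgeSet ∩ B.sym2) := by
    refine Set.disjoint_left.2 fun e ⟨_, heA⟩ ⟨_, heB⟩ => ?_
    induction e using Sym2.ind with
    | h a b => exact Set.disjoint_left.1 hAB (Set.mk_mem_sym2_iff.1 heA).1 (Set.mk_mem_sym2_iff.1 heB).1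
  have hdisjP : Disjoint (G.edgeSet ∩ A.sym2 ∪ G.edgeSet ∩ B.sym2) (Sym2.mk.uncurry '' P) := by
    refine Set.disjoint_right.2 ?_
    rintro _ ⟨⟨a, b⟩, ⟨ha, hb, -⟩, rfl⟩ (⟨-, hab⟩ | ⟨-, hab⟩)
    · exact Set.disjoint_left.1 hAB (Set.mk_mem_sym2_iff.1 hab).2 hb
    · exact Set.disjoint_left.1 hAB ha (Set.mk_mem_sym2_iff.1 hab).1
  have hAfin := hA.sym2.subset (Set.inter_subset_right (s := G.edgeSet))
  have hBfin := hB.sym2.subset (Set.inter_subset_right (s := G.edgeSet))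
  have hPfin : P.Finite := (hA.prod hB).subset fun p hp => ⟨hp.1, hp.2.1⟩
  rw [edgeSet_inter_sym2_union, Set.ncard_union_eq hdisjP (hAfin.union hBfin) (hPfin.image _),
    Set.ncard_union_eq hdisjAB hAfin hBfin, hinj.ncard_image]

end SimpleGraph

/-- If `x` has degree 6, its closed neighborhood induces `K₇`, and there are two
adjacent vertices `y, z` outside `N[x]` sending at least 8 edges to `N(x)`,
then the graph has a `𝒦₉⁻⁶` minor. -/
theorem K7_neighborhood_plus_two_vertices
    {V : Type*} (G : SimpleGraph V) (x y z : V)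
    (hdeg : (G.neighborSet x).ncard = 6)
    (hclq : G.IsClique (insert x (G.neighborSet x)))
    (hy : y ∉ insert x (G.neighborSet x))
    (hz : z ∉ insert x (G.neighborSet x))
    (hyz : G.Adj y z)
    (hedges : 8 ≤ Set.ncard
      {p : V × V | (p.1 = y ∨ p.1 = z) ∧ p.2 ∈ G.neighborSet x ∧ G.Adj p.1 p.2}) :
    HasK96Minor G := by
  have hNfin : (G.neighborSet x).Finite := Set.finite_of_ncard_ne_zero (by omega)
  have hK : (insert x (G.neighborSet x)).ncard = 7 := by
    rw [Set.ncard_insert_of_notMem G.notMem_neighborSet_self hNfin, hdeg]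
  set K := insert x (G.neighborSet x)
  have hKfin : K.Finite := hNfin.insert x
  have hyzK : Disjoint {y, z} K := by simp [hy, hz]
  have hyzclq : G.IsClique {y, z} := isClique_pair.2 fun _ => hyz
  have hcross : 8 ≤ {p : V × V | p.1 ∈ ({y, z} : Set V) ∧ p.2 ∈ K ∧ G.Adj p.1 p.2}.ncard :=
    hedges.trans <| Set.ncard_le_ncard (fun p ⟨h1, h2, h3⟩ => ⟨h1, Set.mem_insert_of_mem x h2, h3⟩)
      (((Set.toFinite {y, z}).prod hKfin).subset fun p hp => ⟨hp.1, hp.2.1⟩)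
  apply hasK96Minor_of_ncard_edgeSet_inter_sym2 (W := {y, z} ∪ K)
  · rw [Set.ncard_union_eq hyzK (Set.toFinite _) hKfin, Set.ncard_pair hyz.ne, hK]
  · rw [ncard_edgeSet_inter_sym2_union (Set.toFinite _) hKfin hyzK,
      hyzclq.ncard_edgeSet_inter_sym2 (Set.toFinite _), hclq.ncard_edgeSet_inter_sym2 hKfin,
      Set.ncard_pair hyz.ne, hK]
    have h1 : (2 : ℕ).choose 2 = 1 := rfl
    have h21 : (7 : ℕ).choose 2 = 21 := rfl
    omega
end
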